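/- Let g be a positive-definite symmetric m×m matrix, y ≠ 0, y_i = g_ij y^j, τ = y_i y^i, β > 0. Define G^a_j = (1/β)δ^a_j + ((β−1)/(βτ)) y^a y_j and H^a_j = β δ^a_j + ((1−β)/τ) y^a y_j. Then H^a_b G^b_j applied in the structural subspace gives: the endomorphism Ψ̄ of V = H ⊕ W defined by Ψ̄(δ_i) = −G^a_i ∂_a, Ψ̄(∂_i) = H^a_i δ_a satisfies Ψ̄(h_i) = −(1/β) v_i and Ψ̄(v_i) = β h_i, where h_i = δ_i − (y_i/τ) y^j δ_j and v_i = ∂_i − (y_i/τ) y^j ∂_j; consequently Ψ̄² = −id on D = span{h_i, v_i}. -/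

import Mathlib

/-!
Both `G` and `H` are of the form `c • 1 + d • y ⊗ y♭`, where `y♭ = g y` and `τ = y♭(y) > 0`.
The vectors `e_i - (y_i / τ) y` spanning the structural distribution are annihilated by `y♭`,
so on them `G` and `H` act as the scalars `1/β` and `β`. Hence `Ψ̄` swaps the horizontal and
vertical generators up to the factors `-1/β` and `β`, whose product is `-1`.
-/

open Matrix

namespace Matrix

variable {n R : Type*} [Fintype n] [CommRing R]

theorem smul_one_add_smul_vecMulVec_mulVec_of_dotProduct_eq_zero [DecidableEq n] (c d : R)
    (x ℓ u : n → R) (hu : ℓ ⬝ᵥ u = 0) :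
    (c • 1 + d • vecMulVec x ℓ) *ᵥ u = c • u := by
  rw [add_mulVec, smul_mulVec, smul_mulVec, one_mulVec, vecMulVec_mulVec, hu]
  simp

theorem dotProduct_single_sub_smul_eq_zero {K : Type*} [Field K] [DecidableEq n]
    (ℓ y : n → K) {τ : K} (hτ : ℓ ⬝ᵥ y = τ) (hτ0 : τ ≠ 0) (i : n) :
    ℓ ⬝ᵥ (Pi.single i 1 - (ℓ i / τ) • y) = 0 := by
  rw [dotProduct_sub, dotProduct_single_one, dotProduct_smul, smul_eq_mul, hτ,
    div_mul_cancel₀ _ hτ0, sub_self]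

def antiDiagMulVec (G H : Matrix n n R) : (n → R) × (n → R) →ₗ[R] (n → R) × (n → R) :=
  (H.mulVecLin ∘ₗ LinearMap.snd R _ _).prod (-(G.mulVecLin ∘ₗ LinearMap.fst R _ _))

theorem antiDiagMulVec_apply (G H : Matrix n n R) (X : (n → R) × (n → R)) :
    antiDiagMulVec G H X = (H *ᵥ X.2, -(G *ᵥ X.1)) :=
  rfl

theorem PosDef.dotProduct_mulVec_self_pos {g : Matrix n n ℝ}
    (hg : g.PosDef) {y : n → ℝ} (hy : y ≠ 0) : 0 < (g *ᵥ y) ⬝ᵥ y := by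
  simpa [dotProduct_comm] using hg.dotProduct_mulVec_pos hy

end Matrix

theorem LinearMap.apply_apply_eq_neg_of_mem_span {R M ι : Type*} [CommRing R] [AddCommGroup M]
    [Module R M] (f : M →ₗ[R] M) (u v : ι → M) (a b : R) (hab : a * b = -1)
    (hu : ∀ i, f (u i) = a • v i) (hv : ∀ i, f (v i) = b • u i) :
    ∀ x ∈ Submodule.span R (Set.range u ∪ Set.range v), f (f x) = -x := by
  have hsq : Set.EqOn (f ∘ₗ f) (-LinearMap.id : M →ₗ[R] M) (Set.range u ∪ Set.range v) := by
    rintro _ (⟨i, rfl⟩ | ⟨i, rfl⟩)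
    · simp [hu, hv, smul_smul, hab]
    · simp [hu, hv, smul_smul, mul_comm b a, hab]
  exact fun x hx => LinearMap.eqOn_span hsq hx

/-- STATEMENT 17: the β-deformed almost complex structure Ψ̄ satisfies
Ψ̄(h_i) = −(1/β) v_i, Ψ̄(v_i) = β h_i, hence Ψ̄² = −id on D = span{h_i, v_i}. -/
theorem deformed_psi_on_structural_subspace {m : ℕ}
    (g : Matrix (Fin m) (Fin m) ℝ) (hg : g.PosDef)
    (y : Fin m → ℝ) (hy : y ≠ 0)
    (β : ℝ) (hβ : 0 < β)
    (yl : Fin m → ℝ) (hyl : ∀ i, yl i = ∑ j, g i j * y j)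
    (τ : ℝ) (hτ : τ = ∑ i, yl i * y i)
    (Gm Hm : Matrix (Fin m) (Fin m) ℝ)
    (hGm : ∀ a j, Gm a j = (1 / β) * (if a = j then 1 else 0)
      + ((β - 1) / (β * τ)) * y a * yl j)
    (hHm : ∀ a j, Hm a j = β * (if a = j then 1 else 0)
      + ((1 - β) / τ) * y a * yl j)
    (Ψb : (Fin m → ℝ) × (Fin m → ℝ) → (Fin m → ℝ) × (Fin m → ℝ))
    (hΨb : ∀ X, Ψb X = (fun a => ∑ i, Hm a i * X.2 i, fun a => -∑ i, Gm a i * X.1 i))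
    (hvec vvec : Fin m → (Fin m → ℝ) × (Fin m → ℝ))
    (hh : ∀ i, hvec i = (Pi.single i 1 - (yl i / τ) • y, 0))
    (hv : ∀ i, vvec i = (0, Pi.single i 1 - (yl i / τ) • y)) :
    (∀ i, Ψb (hvec i) = -(1 / β) • vvec i) ∧
    (∀ i, Ψb (vvec i) = β • hvec i) ∧
    (∀ X ∈ Submodule.span ℝ (Set.range hvec ∪ Set.range vvec), Ψb (Ψb X) = -X) := by
  have hτ' : yl ⬝ᵥ y = τ := hτ.symm
  have hτ0 : τ ≠ 0 := by
    rw [← hτ', funext hyl]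
    exact (hg.dotProduct_mulVec_self_pos hy).ne'
  have hG : Gm = (1 / β) • 1 + ((β - 1) / (β * τ)) • vecMulVec y yl := by
    ext a j; simp [hGm, one_apply, vecMulVec_apply, mul_assoc]
  have hH : Hm = β • 1 + ((1 - β) / τ) • vecMulVec y yl := by
    ext a j; simp [hHm, one_apply, vecMulVec_apply, mul_assoc]
  have hΨ : Ψb = antiDiagMulVec Gm Hm := funext hΨb
  have horth := dotProduct_single_sub_smul_eq_zero yl y hτ' hτ0
  have hΨh : ∀ i, antiDiagMulVec Gm Hm (hvec i) = -(1 / β) • vvec i := fun i => by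
    simp [hh, hv, antiDiagMulVec_apply, hG,
      smul_one_add_smul_vecMulVec_mulVec_of_dotProduct_eq_zero _ _ _ _ _ (horth i)]
  have hΨv : ∀ i, antiDiagMulVec Gm Hm (vvec i) = β • hvec i := fun i => by
    simp [hh, hv, antiDiagMulVec_apply, hH,
      smul_one_add_smul_vecMulVec_mulVec_of_dotProduct_eq_zero _ _ _ _ _ (horth i)]
  subst hΨ
  refine ⟨hΨh, hΨv, LinearMap.apply_apply_eq_neg_of_mem_span _ _ _ _ _ ?_ hΨh hΨv⟩
  field_simp
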